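/- arXiv:2306.17784 — 2 statements merged into one kernel-verified Lean document; each statement's English description precedes it below -/
import Mathlib

section
/- Let R be a unique factorization domain, let x and y be nonzero elements of R, and set z = x·y. Let π ∈ R be an element having no common irreducible factor with z. Then multiplication by x induces an isomorphism of R-modules from R/(y, π) onto the y-torsion submodule (R/(z, π))[y] of R/(z, π). -/
/-- Let `R` be a UFD, `x y ≠ 0`, `z = x * y`, and let `π` have no common
irreducible factor with `z`. Then multiplication by `x` induces an `R`-module isomorphism
`R/(y, π) ≃ (R/(z, π))[y]`, the `y`-torsion submodule of `R/(z, π)`. -/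
theorem stmt_0 {R : Type*} [CommRing R] [IsDomain R] [UniqueFactorizationMonoid R]
    (x y π : R) (hx : x ≠ 0) (hy : y ≠ 0) (z : R) (hz : z = x * y)
    (hπ : ∀ q : R, Irreducible q → q ∣ π → ¬ q ∣ z) :
    ∃ e : (R ⧸ Ideal.span {y, π}) ≃ₗ[R]
        Submodule.torsionBy R (R ⧸ Ideal.span {z, π}) y,
      ∀ a : R, (e (Ideal.Quotient.mk (Ideal.span {y, π}) a) :
          R ⧸ Ideal.span {z, π}) = Ideal.Quotient.mk (Ideal.span {z, π}) (x * a) := by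
  set I : Ideal R := Ideal.span {y, π} with hI
  set J : Ideal R := Ideal.span {z, π} with hJ
  have hzJ : z ∈ J := Ideal.subset_span (by simp)
  have hπJ : π ∈ J := Ideal.subset_span (by simp)
  -- relative primality
  have relprime : ∀ w : R, w ≠ 0 → w ∣ z → IsRelPrime w π := by
    intro w hw0 hwz d hdw hdπ
    by_contra hdu
    obtain ⟨q, hq, hqd⟩ := WfDvdMonoid.exists_irreducible_factor hdu
      (fun h => hw0 (by simpa [h] using hdw))
    exact hπ q hq (hqd.trans hdπ) (hqd.trans (hdw.trans hwz))
  have hxπ : IsRelPrime x π := relprime x hx ⟨y, hz⟩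
  have hyπ : IsRelPrime y π := relprime y hy ⟨x, by rw [hz, mul_comm]⟩
  -- the map R → R/J, a ↦ x*a
  let f0 : R →ₗ[R] R ⧸ J := x • J.mkQ
  have hf0 : ∀ a : R, f0 a = Ideal.Quotient.mk J (x * a) := by
    intro a
    show x • (J.mkQ a) = _
    rw [← map_smul]
    rfl
  have hmem : ∀ a : R, f0 a ∈ Submodule.torsionBy R (R ⧸ J) y := by
    intro a
    rw [Submodule.mem_torsionBy_iff, hf0]
    have : y • Ideal.Quotient.mk J (x * a) = Ideal.Quotient.mk J (z * a) := by
      rw [hz]; show Ideal.Quotient.mk J (y * (x * a)) = _; ring_nf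
    rw [this, Ideal.Quotient.eq_zero_iff_mem]
    exact J.mul_mem_right a hzJ
  let ψ : R →ₗ[R] Submodule.torsionBy R (R ⧸ J) y := f0.codRestrict _ hmem
  have hψ : ∀ a : R, (ψ a : R ⧸ J) = Ideal.Quotient.mk J (x * a) := fun a => hf0 a
  -- kernel of ψ is exactly I
  have hker : LinearMap.ker ψ = I := by
    ext a
    simp only [LinearMap.mem_ker]
    constructor
    · intro h
      have h' : (ψ a : R ⧸ J) = 0 := by rw [h]; rfl
      rw [hψ, Ideal.Quotient.eq_zero_iff_mem] at h'
      obtain ⟨b, c, hbc⟩ := Ideal.mem_span_pair.mp h'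
      -- b * z + c * π = x * a
      have hxd : x ∣ c * π := ⟨a - b * y, by rw [hz] at hbc; linear_combination hbc⟩
      have hxc : x ∣ c := hxπ.dvd_of_dvd_mul_right hxd
      obtain ⟨c', rfl⟩ := hxc
      have key : x * (a - (b * y + c' * π)) = 0 := by
        rw [hz] at hbc; linear_combination -hbc
      have key' : a = b * y + c' * π := by
        have := (mul_eq_zero.mp key).resolve_left hx
        linear_combination this
      exact Ideal.mem_span_pair.mpr ⟨b, c', by linear_combination key'.symm⟩
    · intro h
      obtain ⟨b, c, hbc⟩ := Ideal.mem_span_pair.mp h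
      apply Subtype.ext
      show (ψ a : R ⧸ J) = 0
      rw [hψ, Ideal.Quotient.eq_zero_iff_mem]
      have : x * a = (b * z + c * x * π) := by rw [hz, ← hbc]; ring
      rw [this]
      exact J.add_mem (J.mul_mem_left b hzJ) (J.mul_mem_left (c * x) hπJ)
  -- descend to quotient
  have hle : I ≤ LinearMap.ker ψ := le_of_eq hker.symm
  let e0 : (R ⧸ I) →ₗ[R] Submodule.torsionBy R (R ⧸ J) y := Submodule.liftQ I ψ hle
  have he0 : ∀ a : R, e0 (Ideal.Quotient.mk I a) = ψ a := fun a => rfl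
  have hinj : Function.Injective e0 := by
    rw [← LinearMap.ker_eq_bot]
    exact Submodule.ker_liftQ_eq_bot I ψ hle (le_of_eq hker)
  have hsurj : Function.Surjective e0 := by
    rintro ⟨m, hm⟩
    obtain ⟨a, rfl⟩ := Ideal.Quotient.mk_surjective m
    rw [Submodule.mem_torsionBy_iff] at hm
    have hm' : Ideal.Quotient.mk J (y * a) = 0 := by
      rw [← hm]; rfl
    rw [Ideal.Quotient.eq_zero_iff_mem] at hm'
    obtain ⟨b, c, hbc⟩ := Ideal.mem_span_pair.mp hm'
    -- b * z + c * π = y * a, so y ∣ c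
    have hyd : y ∣ c * π := ⟨a - b * x, by rw [hz] at hbc; linear_combination hbc⟩

    have hyc : y ∣ c := hyπ.dvd_of_dvd_mul_right hyd
    obtain ⟨c', rfl⟩ := hyc
    refine ⟨Ideal.Quotient.mk I b, Subtype.ext ?_⟩
    rw [he0, hψ]
    rw [Ideal.Quotient.mk_eq_mk_iff_sub_mem]
    have : x * b - a = -(c' * π) := by
      have hya : y * (a - x * b) = y * (c' * π) := by
        rw [hz] at hbc; linear_combination -hbc
      have h2 := mul_left_cancel₀ hy hya
      linear_combination -h2
    rw [this]
    exact J.neg_mem (J.mul_mem_left c' hπJ)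
  refine ⟨LinearEquiv.ofBijective e0 ⟨hinj, hsurj⟩, fun a => ?_⟩
  show (e0 (Ideal.Quotient.mk I a) : R ⧸ J) = _
  rw [he0, hψ]
end

section
/- Let Λ = ℤ_p[[T]] and let M be a finitely generated Λ-module such that M[T] = 0 (M has no nonzero T-torsion) and M/TM is a free ℤ_p-module of rank r. Then M is a free Λ-module of rank r. -/
open PowerSeries Submodule

/-- Let `Λ = ℤ_p[[T]]` and let `M` be a finitely generated `Λ`-module with
no nonzero `T`-torsion such that `M/TM` is a free `ℤ_p`-module of rank `r`.  Then `M` is a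
free `Λ`-module of rank `r`. -/
theorem stmt_8 (p : ℕ) [Fact p.Prime] (r : ℕ)
    (M : Type*) [AddCommGroup M] [Module (PowerSeries ℤ_[p]) M]
    [Module ℤ_[p] M] [IsScalarTower ℤ_[p] (PowerSeries ℤ_[p]) M]
    [Module.Finite (PowerSeries ℤ_[p]) M]
    (htor : Submodule.torsionBy (PowerSeries ℤ_[p]) M PowerSeries.X = ⊥)
    (hfree : Nonempty
      ((M ⧸ (Ideal.span {(PowerSeries.X : PowerSeries ℤ_[p])} •
          (⊤ : Submodule (PowerSeries ℤ_[p]) M))) ≃ₗ[ℤ_[p]] (Fin r → ℤ_[p]))) :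
    Nonempty (M ≃ₗ[PowerSeries ℤ_[p]] (Fin r → PowerSeries ℤ_[p])) := by
  set Λ := PowerSeries ℤ_[p]
  set I : Ideal Λ := Ideal.span {(PowerSeries.X : Λ)}
  set N₀ : Submodule Λ M := I • ⊤
  set q : M →ₗ[Λ] M ⧸ N₀ := N₀.mkQ
  obtain ⟨e⟩ := hfree
  set b : Module.Basis (Fin r) ℤ_[p] (M ⧸ N₀) := Module.Basis.ofEquivFun e
  have hXI : (PowerSeries.X : Λ) ∈ I := Ideal.subset_span rfl
  -- scalar action on the quotient factors through constant coefficients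
  have smul_quot : ∀ (a : Λ) (v : M ⧸ N₀), a • v = (constantCoeff (R := ℤ_[p]) a) • v := by
    intro a v
    obtain ⟨m, rfl⟩ := N₀.mkQ_surjective v
    obtain ⟨c, hc⟩ : (PowerSeries.X : Λ) ∣ (a - PowerSeries.C (R := ℤ_[p]) (constantCoeff (R := ℤ_[p]) a)) := by
      rw [PowerSeries.X_dvd_iff]; simp
    have h0 : ((PowerSeries.X * c : Λ) • m : M) ∈ N₀ :=
      Submodule.smul_mem_smul (Ideal.mul_mem_right c _ hXI) trivial
    have ha : a = PowerSeries.C (R := ℤ_[p]) (constantCoeff (R := ℤ_[p]) a) + PowerSeries.X * c := by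
      rw [← hc]; ring
    have hz : (PowerSeries.X * c) • (N₀.mkQ m) = 0 := by
      rw [← map_smul, Submodule.mkQ_apply, Submodule.Quotient.mk_eq_zero]
      exact h0
    calc a • N₀.mkQ m
        = (PowerSeries.C (R := ℤ_[p]) (constantCoeff (R := ℤ_[p]) a)) • N₀.mkQ m
            + (PowerSeries.X * c) • N₀.mkQ m := by rw [← add_smul, ← ha]
      _ = (PowerSeries.C (R := ℤ_[p]) (constantCoeff (R := ℤ_[p]) a)) • N₀.mkQ m := by rw [hz, add_zero]
      _ = (constantCoeff (R := ℤ_[p]) a) • N₀.mkQ m := by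
            rw [← algebraMap_smul Λ (constantCoeff (R := ℤ_[p]) a) (N₀.mkQ m),
              PowerSeries.algebraMap_apply, Algebra.algebraMap_self, RingHom.id_apply]
  -- lift the basis
  have hsurj : ∀ i, ∃ m : M, q m = b i := fun i => N₀.mkQ_surjective (b i)
  choose m hm using hsurj
  set φ : (Fin r → Λ) →ₗ[Λ] M := Fintype.linearCombination Λ m
  have hφ : ∀ x, φ x = ∑ i, x i • m i := fun x => by simp [φ, Fintype.linearCombination_apply]
  -- surjectivity via Nakayama
  have hspan : Submodule.span Λ (Set.range m) = ⊤ := by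
    have hmap : Submodule.map q (Submodule.span Λ (Set.range m)) = ⊤ := by
      rw [eq_top_iff]
      intro v _
      have hv : v ∈ Submodule.span ℤ_[p] (Set.range b) := by rw [b.span_eq]; trivial
      have : Submodule.span ℤ_[p] (Set.range b) ≤
          (Submodule.map q (Submodule.span Λ (Set.range m))).restrictScalars ℤ_[p] := by
        rw [Submodule.span_le]
        rintro _ ⟨i, rfl⟩
        exact ⟨m i, Submodule.subset_span ⟨i, rfl⟩, hm i⟩
      exact this hv
    have hsup : (⊤ : Submodule Λ M) ≤ Submodule.span Λ (Set.range m) ⊔ I • ⊤ := by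
      intro x _
      have : q x ∈ Submodule.map q (Submodule.span Λ (Set.range m)) := hmap ▸ trivial
      obtain ⟨y, hy, hyx⟩ := this
      have hsub : x - y ∈ N₀ := by
        have : q (x - y) = 0 := by rw [map_sub, hyx, sub_self]
        rwa [Submodule.mkQ_apply, Submodule.Quotient.mk_eq_zero] at this
      have hx : x = y + (x - y) := by abel
      rw [hx]
      exact Submodule.add_mem_sup hy hsub
    have hjac : I ≤ Ideal.jacobson ⊥ := by
      rw [IsLocalRing.jacobson_eq_maximalIdeal ⊥ bot_ne_top, Ideal.span_le]
      rintro _ rfl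
      intro hu
      have := hu.map (constantCoeff (R := ℤ_[p]))
      rw [PowerSeries.constantCoeff_X] at this
      exact not_isUnit_zero this
    have := Submodule.le_of_le_smul_of_le_jacobson_bot (Module.Finite.fg_top (R := Λ) (M := M))
      hjac hsup
    exact top_le_iff.mp this
  have hφsurj : Function.Surjective φ := by
    rw [← LinearMap.range_eq_top, ← top_le_iff, ← hspan, Submodule.span_le]
    rintro _ ⟨i, rfl⟩
    exact ⟨Pi.single i 1, by simp [hφ, Pi.single_apply]⟩
  -- key: constant coefficients of kernel elements vanish
  have key : ∀ x : Fin r → Λ, φ x = 0 → ∀ i, constantCoeff (R := ℤ_[p]) (x i) = 0 := by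
    intro x hx
    have h0 : ∑ i, (constantCoeff (R := ℤ_[p]) (x i)) • b i = 0 := by
      have : q (φ x) = 0 := by rw [hx, map_zero]
      rw [hφ, map_sum] at this
      simp_rw [map_smul, hm, smul_quot] at this
      exact this
    have hli := Fintype.linearIndependent_iff.mp b.linearIndependent
      (fun i => constantCoeff (R := ℤ_[p]) (x i)) h0
    exact hli
  -- kernel elements are divisible by X
  have step : ∀ x : Fin r → Λ, φ x = 0 → ∃ y : Fin r → Λ, φ y = 0 ∧ x = fun i => PowerSeries.X * y i := by
    intro x hx
    have hdvd : ∀ i, (PowerSeries.X : Λ) ∣ x i := fun i =>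
      PowerSeries.X_dvd_iff.mpr (key x hx i)
    choose y hy using hdvd
    refine ⟨y, ?_, funext hy⟩
    have hXy : φ ((PowerSeries.X : Λ) • y) = 0 := by
      rw [← hx]
      congr 1
      funext i
      exact (hy i).symm
    have : (PowerSeries.X : Λ) • φ y = 0 := by rw [← map_smul, hXy]
    have : φ y ∈ Submodule.torsionBy Λ M PowerSeries.X := this
    rw [htor] at this
    exact this
  have hφinj : Function.Injective φ := by
    rw [← LinearMap.ker_eq_bot (M := Fin r → Λ)]
    rw [eq_bot_iff]
    intro x hx
    have hcoeff : ∀ k : ℕ, ∀ x : Fin r → Λ, φ x = 0 → ∀ i, PowerSeries.coeff (R := ℤ_[p]) k (x i) = 0 := by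
      intro k
      induction k with
      | zero =>
        intro x hx i
        rw [PowerSeries.coeff_zero_eq_constantCoeff]
        exact key x hx i
      | succ k ih =>
        intro x hx i
        obtain ⟨y, hy0, rfl⟩ := step x hx
        rw [PowerSeries.coeff_succ_X_mul]
        exact ih y hy0 i
    have hx0 : φ x = 0 := hx
    have : x = 0 := by
      funext i
      ext k
      simpa using hcoeff k x hx0 i
    simp [this]
  exact ⟨(LinearEquiv.ofBijective φ ⟨hφinj, hφsurj⟩).symm⟩
end
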